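/- arXiv:2403.01001 — 6 statements merged into one kernel-verified Lean document; each statement's English description precedes it below -/
import Mathlib

section
/- For any hypergraph H, the lazy burning number satisfies b_L(H) ≥ |V(H)| − ℰ(H), where ℰ(H) is the number of edges of H that are not singleton, empty, or duplicate edges. -/
/-!
Whenever a vertex outside the burned set catches fire, it does so through a non-singleton
edge all of whose other vertices are already burned, and after that step the edge is
entirely burned. So every vertex burned by propagation uses up a distinct non-singleton
edge, and at most `ℰ(H)` vertices can burn other than the initial ones.
-/

open Finset

/-- A hypergraph: a finite vertex set together with a finite set of edges,
each edge being a subset of the vertex set. -/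
structure LBHypergraph (α : Type*) [DecidableEq α] where
  verts : Finset α
  edges : Finset (Finset α)
  edges_sub : ∀ e ∈ edges, e ⊆ verts

namespace LBHypergraph

variable {α : Type*} [DecidableEq α]

/-- `Burns H S v`: starting from the initially burned set `S`, the vertex `v`
eventually burns under the propagation rule: an unburned vertex `v` catches fire
when some non-singleton edge `e ∋ v` has all of `e \ {v}` burned. -/
inductive Burns (H : LBHypergraph α) (S : Finset α) : α → Prop
  | init {v : α} : v ∈ S → Burns H S v
  | prop {v : α} {e : Finset α} : v ∈ H.verts → e ∈ H.edges → 2 ≤ e.card → v ∈ e →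
      (∀ u ∈ e, u ≠ v → Burns H S u) → Burns H S v

/-- A lazy burning set: a set of vertices whose propagation closure is all of `V(H)`. -/
def IsLazySet (H : LBHypergraph α) (S : Finset α) : Prop :=
  S ⊆ H.verts ∧ ∀ v ∈ H.verts, H.Burns S v

/-- The lazy burning number: the minimum size of a lazy burning set. -/
noncomputable def lazyBurn (H : LBHypergraph α) : ℕ :=
  sInf {n | ∃ S : Finset α, H.IsLazySet S ∧ S.card = n}

/-- One round of fire propagation applied to the burned set `F`. -/
noncomputable def step (H : LBHypergraph α) (F : Finset α) : Finset α :=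
  F ∪ H.verts.filter (fun v => ∃ e ∈ H.edges, 2 ≤ e.card ∧ v ∈ e ∧ e \ {v} ⊆ F)

/-- The set of burned vertices after playing the sources `us` in order
(each round: propagation happens, and simultaneously the next source is burned). -/
noncomputable def state (H : LBHypergraph α) (us : List α) : Finset α :=
  us.foldl (fun F u => insert u (H.step F)) ∅

/-- `us` is a burning sequence for `H`: each source is a vertex that was not burned
at the end of the previous round, and after the final round all of `V(H)` is burned. -/
def IsBurningSeq (H : LBHypergraph α) (us : List α) : Prop :=
  (∀ i : Fin us.length, us.get i ∈ H.verts ∧ us.get i ∉ H.state (us.take i.1)) ∧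
  H.state us = H.verts

/-- The (round-based) burning number: the minimum length of a burning sequence. -/
noncomputable def burn (H : LBHypergraph α) : ℕ :=
  sInf {n | ∃ us : List α, H.IsBurningSeq us ∧ us.length = n}

/-- An independent set of vertices: one containing no edge of `H`. -/
def IsIndep (H : LBHypergraph α) (X : Finset α) : Prop :=
  X ⊆ H.verts ∧ ∀ e ∈ H.edges, ¬ e ⊆ X

/-- The independence number `α(H)`. -/
noncomputable def indepNum (H : LBHypergraph α) : ℕ :=
  sSup {n | ∃ X : Finset α, H.IsIndep X ∧ X.card = n}

/-- Two vertices are adjacent if they lie in a common edge. -/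
def Adj (H : LBHypergraph α) (u v : α) : Prop :=
  ∃ e ∈ H.edges, u ∈ e ∧ v ∈ e

/-- Two vertices are connected if they are joined by a path (alternating
vertices and edges). -/
def Conn (H : LBHypergraph α) (u v : α) : Prop :=
  Relation.ReflTransGen H.Adj u v

/-- A hypergraph is connected if every two vertices are connected. -/
def IsConnected (H : LBHypergraph α) : Prop :=
  ∀ u ∈ H.verts, ∀ v ∈ H.verts, H.Conn u v

/-- `G : Fin k → LBHypergraph α` is the family of connected components of `H`:
the vertex sets are nonempty, partition `V(H)`, each component carries exactly the
edges of `H` lying inside it, each component is connected, and components are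
maximal with respect to connectivity. -/
def IsComponents (H : LBHypergraph α) {k : ℕ} (G : Fin k → LBHypergraph α) : Prop :=
  (∀ i, (G i).verts.Nonempty) ∧
  (∀ i, (G i).verts ⊆ H.verts) ∧
  (∀ i, (G i).edges = H.edges.filter (fun e => e ⊆ (G i).verts)) ∧
  (∀ v ∈ H.verts, ∃! i, v ∈ (G i).verts) ∧
  (∀ i, ∀ u ∈ (G i).verts, ∀ v ∈ (G i).verts, H.Conn u v) ∧
  (∀ i, ∀ u ∈ (G i).verts, ∀ v ∈ H.verts, H.Conn u v → v ∈ (G i).verts)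

end LBHypergraph

namespace LBHypergraph

variable {α : Type*} [DecidableEq α] {H : LBHypergraph α}

lemma Burns.exists_forced_of_notMem {S F : Finset α} (hSF : S ⊆ F) {v : α}
    (hv : H.Burns S v) (hvF : v ∉ F) :
    ∃ w ∈ H.verts, w ∉ F ∧ ∃ e ∈ H.edges, 2 ≤ e.card ∧ w ∈ e ∧ e.erase w ⊆ F := by
  induction hv with
  | init hvS => exact absurd (hSF hvS) hvF
  | @prop w e hw he hcard hwe _ ih =>
    by_cases hforced : e.erase w ⊆ F
    · exact ⟨w, hw, hvF, e, he, hcard, hwe, hforced⟩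
    · obtain ⟨u, hu, huF⟩ := not_subset.mp hforced
      exact ih u (mem_of_mem_erase hu) (ne_of_mem_erase hu) huF

lemma card_filter_not_subset_insert_lt {E : Finset (Finset α)} {F e : Finset α} {w : α}
    (he : e ∈ E) (hwe : w ∈ e) (hwF : w ∉ F) (heF : e.erase w ⊆ F) :
    (E.filter (fun x => ¬ x ⊆ insert w F)).card < (E.filter (fun x => ¬ x ⊆ F)).card := by
  have hsub : E.filter (fun x => ¬ x ⊆ insert w F) ⊆ E.filter (fun x => ¬ x ⊆ F) :=
    monotone_filter_right E fun _ _ hx hxF => hx (hxF.trans (subset_insert w F))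
  refine card_lt_card ((ssubset_iff_of_subset hsub).mpr ⟨e, ?_, ?_⟩)
  · exact mem_filter.mpr ⟨he, fun heF' => hwF (heF' hwe)⟩
  · exact fun h => (mem_filter.mp h).2 (subset_insert_iff.mpr heF)

lemma card_sdiff_le_card_nontrivial_edges_not_subset {S : Finset α}
    (hS : ∀ v ∈ H.verts, H.Burns S v) {F : Finset α} (hSF : S ⊆ F) :
    (H.verts \ F).card ≤
      ((H.edges.filter (fun e => 2 ≤ e.card)).filter (fun e => ¬ e ⊆ F)).card := by
  obtain hdone | ⟨v, hv⟩ := (H.verts \ F).eq_empty_or_nonempty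
  · simp [hdone]
  obtain ⟨hvV, hvF⟩ := mem_sdiff.mp hv
  obtain ⟨w, hwV, hwF, e, he, hcard, hwe, heF⟩ :=
    (hS v hvV).exists_forced_of_notMem hSF hvF
  have hcard_sdiff : (H.verts \ insert w F).card + 1 = (H.verts \ F).card := by
    rw [sdiff_insert, card_erase_add_one (mem_sdiff.mpr ⟨hwV, hwF⟩)]
  have ih := card_sdiff_le_card_nontrivial_edges_not_subset hS
    (hSF.trans (subset_insert w F))
  have hlt := card_filter_not_subset_insert_lt (E := H.edges.filter (fun e => 2 ≤ e.card))
    (mem_filter.mpr ⟨he, hcard⟩) hwe hwF heF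
  omega
termination_by (H.verts \ F).card
decreasing_by
  rw [sdiff_insert, card_erase_of_mem (mem_sdiff.mpr ⟨hwV, hwF⟩)]
  exact Nat.sub_lt (card_pos.mpr ⟨v, hv⟩) one_pos

lemma IsLazySet.card_sub_card_nontrivial_edges_le {S : Finset α} (hS : H.IsLazySet S) :
    H.verts.card - (H.edges.filter (fun e => 2 ≤ e.card)).card ≤ S.card := by
  have hcount := card_sdiff_le_card_nontrivial_edges_not_subset hS.2 (subset_refl S)
  have hfilter := card_filter_le (H.edges.filter (fun e => 2 ≤ e.card)) (fun e => ¬ e ⊆ S)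
  have hsdiff := le_card_sdiff S H.verts
  omega

lemma exists_isLazySet_card_eq_lazyBurn (H : LBHypergraph α) :
    ∃ S, H.IsLazySet S ∧ S.card = H.lazyBurn :=
  Nat.sInf_mem (s := {n | ∃ S : Finset α, H.IsLazySet S ∧ S.card = n})
    ⟨H.verts.card, H.verts, ⟨subset_refl _, fun _ hv => Burns.init hv⟩, rfl⟩

end LBHypergraph

theorem lazyBurn_ge_verts_sub_nontrivial_edges {α : Type*} [DecidableEq α]
    (H : LBHypergraph α) :
    H.verts.card - (H.edges.filter (fun e => 2 ≤ e.card)).card ≤ H.lazyBurn := by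
  obtain ⟨S, hS, hcard⟩ := H.exists_isLazySet_card_eq_lazyBurn
  exact hcard ▸ hS.card_sub_card_nontrivial_edges_le
end

section
/- For any simple hypergraph H (no repeated edges and every edge has at least 2 vertices), b_L(H) ≥ |V(H)| − |E(H)|. -/
/-!
If a lazy burning set `S` is not all of `V(H)`, the fire must leave `S` through some edge `e`
with all of `e` but one vertex `w` already in `S`. Then `S ∪ {w}` is a lazy burning set of
`H - e`, since every vertex that `e` could ever ignite already lies in `S ∪ {w}`. Induction on
the number of edges gives `|V(H)| ≤ |S| + |E(H)|`.
-/

open Finset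

/-- A hypergraph: a finite vertex set together with a finite set of edges,
each edge being a subset of the vertex set. -/
structure FinHypergraph (α : Type*) [DecidableEq α] where
  verts : Finset α
  edges : Finset (Finset α)
  edges_sub : ∀ e ∈ edges, e ⊆ verts

namespace FinHypergraph

variable {α : Type*} [DecidableEq α]

/-- `Burns H S v`: starting from the initially burned set `S`, the vertex `v`
eventually burns under the propagation rule: an unburned vertex `v` catches fire
when some non-singleton edge `e ∋ v` has all of `e \ {v}` burned. -/
inductive Burns (H : FinHypergraph α) (S : Finset α) : α → Prop
  | init {v : α} : v ∈ S → Burns H S v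
  | prop {v : α} {e : Finset α} : v ∈ H.verts → e ∈ H.edges → 2 ≤ e.card → v ∈ e →
      (∀ u ∈ e, u ≠ v → Burns H S u) → Burns H S v

/-- A lazy burning set: a set of vertices whose propagation closure is all of `V(H)`. -/
def IsLazySet (H : FinHypergraph α) (S : Finset α) : Prop :=
  S ⊆ H.verts ∧ ∀ v ∈ H.verts, H.Burns S v

/-- The lazy burning number: the minimum size of a lazy burning set. -/
noncomputable def lazyBurn (H : FinHypergraph α) : ℕ :=
  sInf {n | ∃ S : Finset α, H.IsLazySet S ∧ S.card = n}

/-- One round of fire propagation applied to the burned set `F`. -/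
noncomputable def step (H : FinHypergraph α) (F : Finset α) : Finset α :=
  F ∪ H.verts.filter (fun v => ∃ e ∈ H.edges, 2 ≤ e.card ∧ v ∈ e ∧ e \ {v} ⊆ F)

/-- The set of burned vertices after playing the sources `us` in order
(each round: propagation happens, and simultaneously the next source is burned). -/
noncomputable def state (H : FinHypergraph α) (us : List α) : Finset α :=
  us.foldl (fun F u => insert u (H.step F)) ∅

/-- `us` is a burning sequence for `H`: each source is a vertex that was not burned
at the end of the previous round, and after the final round all of `V(H)` is burned. -/
def IsBurningSeq (H : FinHypergraph α) (us : List α) : Prop :=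
  (∀ i : Fin us.length, us.get i ∈ H.verts ∧ us.get i ∉ H.state (us.take i.1)) ∧
  H.state us = H.verts

/-- The (round-based) burning number: the minimum length of a burning sequence. -/
noncomputable def burn (H : FinHypergraph α) : ℕ :=
  sInf {n | ∃ us : List α, H.IsBurningSeq us ∧ us.length = n}

/-- An independent set of vertices: one containing no edge of `H`. -/
def IsIndep (H : FinHypergraph α) (X : Finset α) : Prop :=
  X ⊆ H.verts ∧ ∀ e ∈ H.edges, ¬ e ⊆ X

/-- The independence number `α(H)`. -/
noncomputable def indepNum (H : FinHypergraph α) : ℕ :=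
  sSup {n | ∃ X : Finset α, H.IsIndep X ∧ X.card = n}

/-- Two vertices are adjacent if they lie in a common edge. -/
def Adj (H : FinHypergraph α) (u v : α) : Prop :=
  ∃ e ∈ H.edges, u ∈ e ∧ v ∈ e

/-- Two vertices are connected if they are joined by a path (alternating
vertices and edges). -/
def Conn (H : FinHypergraph α) (u v : α) : Prop :=
  Relation.ReflTransGen H.Adj u v

/-- A hypergraph is connected if every two vertices are connected. -/
def IsConnected (H : FinHypergraph α) : Prop :=
  ∀ u ∈ H.verts, ∀ v ∈ H.verts, H.Conn u v

/-- `G : Fin k → FinHypergraph α` is the family of connected components of `H`: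
the vertex sets are nonempty, partition `V(H)`, each component carries exactly the
edges of `H` lying inside it, each component is connected, and components are
maximal with respect to connectivity. -/
def IsComponents (H : FinHypergraph α) {k : ℕ} (G : Fin k → FinHypergraph α) : Prop :=
  (∀ i, (G i).verts.Nonempty) ∧
  (∀ i, (G i).verts ⊆ H.verts) ∧
  (∀ i, (G i).edges = H.edges.filter (fun e => e ⊆ (G i).verts)) ∧
  (∀ v ∈ H.verts, ∃! i, v ∈ (G i).verts) ∧
  (∀ i, ∀ u ∈ (G i).verts, ∀ v ∈ (G i).verts, H.Conn u v) ∧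
  (∀ i, ∀ u ∈ (G i).verts, ∀ v ∈ H.verts, H.Conn u v → v ∈ (G i).verts)

end FinHypergraph

namespace FinHypergraph

variable {α : Type*} [DecidableEq α]

@[simps]
def eraseEdge (H : FinHypergraph α) (e : Finset α) : FinHypergraph α :=
  ⟨H.verts, H.edges.erase e, fun _ hf => H.edges_sub _ (mem_of_mem_erase hf)⟩

theorem Burns.exists_ready_of_notMem {H : FinHypergraph α} {S : Finset α} {v : α}
    (hv : H.Burns S v) (hvS : v ∉ S) :
    ∃ w e, w ∈ H.verts ∧ w ∉ S ∧ e ∈ H.edges ∧ e \ {w} ⊆ S := by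
  induction hv with
  | init hv => exact absurd hv hvS
  | @prop w f hw hf _ _ _ ih =>
    by_cases hready : f \ {w} ⊆ S
    · exact ⟨w, f, hw, hvS, hf, hready⟩
    · obtain ⟨u, hu, huS⟩ := not_subset.1 hready
      rw [mem_sdiff, mem_singleton] at hu
      exact ih u hu.1 hu.2 huS

theorem Burns.eraseEdge_insert {H : FinHypergraph α} {S e : Finset α} {v w : α}
    (hready : e \ {v} ⊆ S) (hw : H.Burns S w) : (H.eraseEdge e).Burns (insert v S) w := by
  induction hw with
  | init hw => exact .init (mem_insert_of_mem hw)
  | @prop w f hw hf hcard hwf _ ih =>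
    by_cases hfe : f = e
    · subst hfe
      by_cases hwv : w = v
      · exact .init (hwv ▸ mem_insert_self v S)
      · exact .init (mem_insert_of_mem (hready (by simp [hwf, hwv])))
    · exact .prop hw (mem_erase.2 ⟨hfe, hf⟩) hcard hwf ih

theorem IsLazySet.eraseEdge_insert {H : FinHypergraph α} {S e : Finset α} {v : α}
    (hS : H.IsLazySet S) (hv : v ∈ H.verts) (hready : e \ {v} ⊆ S) :
    (H.eraseEdge e).IsLazySet (insert v S) :=
  ⟨insert_subset hv hS.1, fun w hw => (hS.2 w hw).eraseEdge_insert hready⟩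

theorem IsLazySet.card_verts_le {H : FinHypergraph α} {S : Finset α} (hS : H.IsLazySet S) :
    H.verts.card ≤ S.card + H.edges.card := by
  by_cases hVS : H.verts ⊆ S
  · have := card_le_card hVS
    omega
  obtain ⟨v, hv, hvS⟩ := not_subset.1 hVS
  obtain ⟨w, e, hw, hwS, he, hready⟩ := (hS.2 v hv).exists_ready_of_notMem hvS
  have ih := (hS.eraseEdge_insert hw hready).card_verts_le
  rw [eraseEdge_verts, eraseEdge_edges, card_insert_of_notMem hwS] at ih
  have := card_erase_add_one he
  omega
termination_by H.edges.card
decreasing_by exact card_erase_lt_of_mem he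

theorem isLazySet_verts (H : FinHypergraph α) : H.IsLazySet H.verts :=
  ⟨subset_rfl, fun _ hv => .init hv⟩

theorem exists_isLazySet_card_eq_lazyBurn (H : FinHypergraph α) :
    ∃ S, H.IsLazySet S ∧ S.card = H.lazyBurn :=
  Nat.sInf_mem (s := {n | ∃ S, H.IsLazySet S ∧ S.card = n}) ⟨_, H.verts, H.isLazySet_verts, rfl⟩

end FinHypergraph

theorem lazyBurn_ge_verts_sub_edges_of_simple_general {α : Type*} [DecidableEq α]
    (H : FinHypergraph α) :
    H.verts.card - H.edges.card ≤ H.lazyBurn := by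
  obtain ⟨S, hS, hcard⟩ := H.exists_isLazySet_card_eq_lazyBurn
  have := hS.card_verts_le
  omega

theorem lazyBurn_ge_verts_sub_edges_of_simple {α : Type*} [DecidableEq α]
    (H : FinHypergraph α) (hsimple : ∀ e ∈ H.edges, 2 ≤ e.card) :
    H.verts.card - H.edges.card ≤ H.lazyBurn :=
  lazyBurn_ge_verts_sub_edges_of_simple_general H
end

section
/- For a simple hypergraph H with no isolated vertices and |V(H)| ≥ 2, |V(H)| − |E(H)| ≤ b_L(H) < b(H) ≤ α(H) + 1. -/
open Finset

/-- A hypergraph: a finite vertex set together with a finite set of edges,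
each edge being a subset of the vertex set. -/
structure Hypergraph' (α : Type*) [DecidableEq α] where
  verts : Finset α
  edges : Finset (Finset α)
  edges_sub : ∀ e ∈ edges, e ⊆ verts

namespace Hypergraph'

variable {α : Type*} [DecidableEq α]

/-- `Burns H S v`: starting from the initially burned set `S`, the vertex `v`
eventually burns under the propagation rule: an unburned vertex `v` catches fire
when some non-singleton edge `e ∋ v` has all of `e \ {v}` burned. -/
inductive Burns (H : Hypergraph' α) (S : Finset α) : α → Prop
  | init {v : α} : v ∈ S → Burns H S v
  | prop {v : α} {e : Finset α} : v ∈ H.verts → e ∈ H.edges → 2 ≤ e.card → v ∈ e →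
      (∀ u ∈ e, u ≠ v → Burns H S u) → Burns H S v

/-- A lazy burning set: a set of vertices whose propagation closure is all of `V(H)`. -/
def IsLazySet (H : Hypergraph' α) (S : Finset α) : Prop :=
  S ⊆ H.verts ∧ ∀ v ∈ H.verts, H.Burns S v

/-- The lazy burning number: the minimum size of a lazy burning set. -/
noncomputable def lazyBurn (H : Hypergraph' α) : ℕ :=
  sInf {n | ∃ S : Finset α, H.IsLazySet S ∧ S.card = n}

/-- One round of fire propagation applied to the burned set `F`. -/
noncomputable def step (H : Hypergraph' α) (F : Finset α) : Finset α :=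
  F ∪ H.verts.filter (fun v => ∃ e ∈ H.edges, 2 ≤ e.card ∧ v ∈ e ∧ e \ {v} ⊆ F)

/-- The set of burned vertices after playing the sources `us` in order
(each round: propagation happens, and simultaneously the next source is burned). -/
noncomputable def state (H : Hypergraph' α) (us : List α) : Finset α :=
  us.foldl (fun F u => insert u (H.step F)) ∅

/-- `us` is a burning sequence for `H`: each source is a vertex that was not burned
at the end of the previous round, and after the final round all of `V(H)` is burned. -/
def IsBurningSeq (H : Hypergraph' α) (us : List α) : Prop :=
  (∀ i : Fin us.length, us.get i ∈ H.verts ∧ us.get i ∉ H.state (us.take i.1)) ∧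
  H.state us = H.verts

/-- The (round-based) burning number: the minimum length of a burning sequence. -/
noncomputable def burn (H : Hypergraph' α) : ℕ :=
  sInf {n | ∃ us : List α, H.IsBurningSeq us ∧ us.length = n}

/-- An independent set of vertices: one containing no edge of `H`. -/
def IsIndep (H : Hypergraph' α) (X : Finset α) : Prop :=
  X ⊆ H.verts ∧ ∀ e ∈ H.edges, ¬ e ⊆ X

/-- The independence number `α(H)`. -/
noncomputable def indepNum (H : Hypergraph' α) : ℕ :=
  sSup {n | ∃ X : Finset α, H.IsIndep X ∧ X.card = n}

/-- Two vertices are adjacent if they lie in a common edge. -/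
def Adj (H : Hypergraph' α) (u v : α) : Prop :=
  ∃ e ∈ H.edges, u ∈ e ∧ v ∈ e

/-- Two vertices are connected if they are joined by a path (alternating
vertices and edges). -/
def Conn (H : Hypergraph' α) (u v : α) : Prop :=
  Relation.ReflTransGen H.Adj u v

/-- A hypergraph is connected if every two vertices are connected. -/
def IsConnected (H : Hypergraph' α) : Prop :=
  ∀ u ∈ H.verts, ∀ v ∈ H.verts, H.Conn u v

/-- `G : Fin k → Hypergraph' α` is the family of connected components of `H`:
the vertex sets are nonempty, partition `V(H)`, each component carries exactly the
edges of `H` lying inside it, each component is connected, and components are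
maximal with respect to connectivity. -/
def IsComponents (H : Hypergraph' α) {k : ℕ} (G : Fin k → Hypergraph' α) : Prop :=
  (∀ i, (G i).verts.Nonempty) ∧
  (∀ i, (G i).verts ⊆ H.verts) ∧
  (∀ i, (G i).edges = H.edges.filter (fun e => e ⊆ (G i).verts)) ∧
  (∀ v ∈ H.verts, ∃! i, v ∈ (G i).verts) ∧
  (∀ i, ∀ u ∈ (G i).verts, ∀ v ∈ (G i).verts, H.Conn u v) ∧
  (∀ i, ∀ u ∈ (G i).verts, ∀ v ∈ H.verts, H.Conn u v → v ∈ (G i).verts)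

end Hypergraph'

/-! Burning the vertices outside a lazy burning set `S` one at a time, each completes an edge for
the first time, so `|V| ≤ |S| + |E|`. Dropping the last source of a burning sequence leaves a lazy
burning set, since the last source then burns along any edge through it. Finally, choose sources
greedily so that they stay independent; once no unburned vertex can be added, all unburned vertices
but one burn in the next round, and one more source finishes. -/

namespace Hypergraph'

variable {α : Type*} [DecidableEq α] {H : Hypergraph' α} {S T F X : Finset α} {us : List α}
  {u v : α}

theorem Burns.mono (h : H.Burns S v) (hST : S ⊆ T) : H.Burns T v := by
  induction h with
  | init hv => exact .init (hST hv)
  | prop hv he hc hve _ ih => exact .prop hv he hc hve ih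

theorem Burns.mem_or_exists_edge_sdiff_subset (h : H.Burns S v) (hSF : S ⊆ F) :
    v ∈ F ∨ ∃ w ∉ F, ∃ e ∈ H.edges, w ∈ e ∧ e \ {w} ⊆ F := by
  induction h with
  | init hv => exact .inl (hSF hv)
  | @prop v e _ he _ hve _ ih =>
    by_cases hrest : e \ {v} ⊆ F
    · by_cases hvF : v ∈ F
      · exact .inl hvF
      · exact .inr ⟨v, hvF, e, he, hve, hrest⟩
    · obtain ⟨u, hu, huF⟩ := not_subset.1 hrest
      rw [mem_sdiff, mem_singleton] at hu
      exact .inr ((ih u hu.1 hu.2).resolve_left huF)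

theorem card_sdiff_le_card_filter_not_subset (hS : ∀ v ∈ H.verts, H.Burns S v) (hSF : S ⊆ F) :
    (H.verts \ F).card ≤ (H.edges.filter fun e => ¬ e ⊆ F).card := by
  induction hn : (H.verts \ F).card generalizing F with
  | zero => exact Nat.zero_le _
  | succ n ih =>
    obtain ⟨v, hv⟩ := card_pos.1 (show 0 < (H.verts \ F).card by omega)
    obtain ⟨w, hwF, e, he, hwe, hrest⟩ := ((hS v (mem_sdiff.1 hv).1).mem_or_exists_edge_sdiff_subset
      hSF).resolve_left (mem_sdiff.1 hv).2
    have hw : w ∈ H.verts \ F := mem_sdiff.2 ⟨H.edges_sub e he hwe, hwF⟩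
    have hcard : (H.verts \ insert w F).card = n := by
      rw [sdiff_insert, card_erase_of_mem hw, hn, Nat.add_sub_cancel]
    have hfilter : (H.edges.filter fun e => ¬ e ⊆ insert w F) ⊆
        (H.edges.filter fun e => ¬ e ⊆ F).erase e := by
      intro f hf
      rw [mem_filter] at hf
      refine mem_erase.2 ⟨?_, mem_filter.2 ⟨hf.1, fun hfF => hf.2 (hfF.trans (subset_insert w F))⟩⟩
      rintro rfl
      exact hf.2 (subset_insert_iff.2 (sdiff_singleton_eq_erase w f ▸ hrest))
    have he' : e ∈ H.edges.filter fun e => ¬ e ⊆ F :=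
      mem_filter.2 ⟨he, fun heF => hwF (heF hwe)⟩
    calc n + 1 ≤ (H.edges.filter fun e => ¬ e ⊆ insert w F).card + 1 :=
          Nat.succ_le_succ (ih (hSF.trans (subset_insert w F)) hcard)
      _ ≤ ((H.edges.filter fun e => ¬ e ⊆ F).erase e).card + 1 :=
          Nat.succ_le_succ (card_le_card hfilter)
      _ = (H.edges.filter fun e => ¬ e ⊆ F).card := card_erase_add_one he'

theorem IsLazySet.card_verts_le (hS : H.IsLazySet S) : H.verts.card ≤ S.card + H.edges.card :=
  calc H.verts.card ≤ (H.verts \ S).card + S.card := card_le_card_sdiff_add_card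
    _ ≤ (H.edges.filter fun e => ¬ e ⊆ S).card + S.card :=
      Nat.add_le_add_right (card_sdiff_le_card_filter_not_subset hS.2 Subset.rfl) _
    _ ≤ S.card + H.edges.card := by rw [add_comm]; exact Nat.add_le_add_left (card_filter_le _ _) _

theorem lazyBurn_le (hS : H.IsLazySet S) : H.lazyBurn ≤ S.card :=
  Nat.sInf_le ⟨S, hS, rfl⟩

theorem exists_isLazySet_card_eq_lazyBurn : ∃ S, H.IsLazySet S ∧ S.card = H.lazyBurn :=
  Nat.sInf_mem (s := {n | ∃ S, H.IsLazySet S ∧ S.card = n})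
    ⟨H.verts.card, H.verts, ⟨Subset.rfl, fun _ hv => .init hv⟩, rfl⟩

theorem card_verts_sub_card_edges_le_lazyBurn : H.verts.card - H.edges.card ≤ H.lazyBurn := by
  obtain ⟨S, hS, hcard⟩ := H.exists_isLazySet_card_eq_lazyBurn
  have := hS.card_verts_le
  omega

theorem subset_step (F : Finset α) : F ⊆ H.step F := subset_union_left

theorem step_subset_verts (h : F ⊆ H.verts) : H.step F ⊆ H.verts :=
  union_subset h (filter_subset _ _)

theorem burns_of_mem_step (hF : ∀ u ∈ F, H.Burns S u) (hv : v ∈ H.step F) : H.Burns S v := by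
  rcases mem_union.1 hv with hv | hv
  · exact hF v hv
  · obtain ⟨hvV, e, he, hc, hve, hrest⟩ := mem_filter.1 hv
    exact .prop hvV he hc hve fun u hu huv => hF u (hrest (mem_sdiff.2 ⟨hu, by simpa⟩))

theorem state_append_singleton (us : List α) (v : α) :
    H.state (us ++ [v]) = insert v (H.step (H.state us)) := by
  simp [state, List.foldl_append]

theorem state_subset_state_append_singleton (us : List α) (v : α) :
    H.state us ⊆ H.state (us ++ [v]) :=
  (H.subset_step _).trans (by rw [state_append_singleton]; exact subset_insert _ _)

theorem mem_state_of_mem (h : u ∈ us) : u ∈ H.state us := by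
  induction us using List.reverseRecOn with
  | nil => simp at h
  | append_singleton us v ih =>
    rcases List.mem_append.1 h with h | h
    · exact H.state_subset_state_append_singleton us v (ih h)
    · rw [List.mem_singleton.1 h, state_append_singleton]
      exact mem_insert_self _ _

theorem state_subset_verts (h : ∀ u ∈ us, u ∈ H.verts) : H.state us ⊆ H.verts := by
  induction us using List.reverseRecOn with
  | nil => exact empty_subset _
  | append_singleton us v ih =>
    rw [state_append_singleton]
    exact insert_subset (h v (by simp)) (step_subset_verts (ih fun u hu => h u (by simp [hu])))

theorem burns_of_mem_state (h : v ∈ H.state us) : H.Burns us.toFinset v := by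
  induction us using List.reverseRecOn generalizing v with
  | nil => simp [state] at h
  | append_singleton us w ih =>
    rw [state_append_singleton, mem_insert] at h
    rcases h with rfl | h
    · exact .init (by simp)
    · exact burns_of_mem_step (fun u hu => (ih hu).mono (by simp)) h

/-- The first conjunct of `IsBurningSeq`. -/
def IsValidSeq (H : Hypergraph' α) (us : List α) : Prop :=
  ∀ i : Fin us.length, us.get i ∈ H.verts ∧ us.get i ∉ H.state (us.take i.1)

theorem isValidSeq_nil : H.IsValidSeq [] := fun i => i.elim0

theorem IsValidSeq.append_singleton (h : H.IsValidSeq us) (hvV : v ∈ H.verts)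
    (hv : v ∉ H.state us) : H.IsValidSeq (us ++ [v]) := by
  rintro ⟨i, hi⟩
  rw [List.length_append, List.length_singleton] at hi
  rcases Nat.lt_succ_iff_lt_or_eq.1 hi with hi | rfl
  · simpa [List.getElem_append_left hi, List.take_append_of_le_length hi.le] using h ⟨i, hi⟩
  · simp [hvV, hv]

theorem IsValidSeq.mem_verts (h : H.IsValidSeq us) (hu : u ∈ us) : u ∈ H.verts := by
  obtain ⟨i, rfl⟩ := List.mem_iff_get.1 hu
  exact (h i).1

theorem burn_le (h : H.IsBurningSeq us) : H.burn ≤ us.length :=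
  Nat.sInf_le ⟨us, h, rfl⟩

theorem exists_isBurningSeq_length_eq_burn (h : ∃ us, H.IsBurningSeq us) :
    ∃ us, H.IsBurningSeq us ∧ us.length = H.burn :=
  let ⟨us, hus⟩ := h
  Nat.sInf_mem (s := {n | ∃ us, H.IsBurningSeq us ∧ us.length = n}) ⟨us.length, us, hus, rfl⟩

theorem IsBurningSeq.isLazySet_toFinset (hsimple : ∀ e ∈ H.edges, 2 ≤ e.card)
    (hnoiso : ∀ v ∈ H.verts, ∃ e ∈ H.edges, v ∈ e) {z : α} (h : H.IsBurningSeq (us ++ [z])) :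
    H.IsLazySet us.toFinset := by
  have hstate : insert z (H.step (H.state us)) = H.verts := by
    rw [← state_append_singleton]; exact h.2
  have hburns : ∀ w ∈ H.verts, w ≠ z → H.Burns us.toFinset w := fun w hw hwz =>
    burns_of_mem_step (fun _ hu => burns_of_mem_state hu)
      ((mem_insert.1 (hstate ▸ hw)).resolve_left hwz)
  refine ⟨fun u hu => IsValidSeq.mem_verts h.1 (List.mem_append_left _ (List.mem_toFinset.1 hu)),
    fun v hv => ?_⟩
  by_cases hvz : v = z
  · obtain ⟨e, he, hve⟩ := hnoiso v hv
    exact .prop hv he (hsimple e he) hve fun u hu huv =>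
      hburns u (H.edges_sub e he hu) (hvz ▸ huv)
  · exact hburns v hv hvz

theorem lazyBurn_lt_length (hsimple : ∀ e ∈ H.edges, 2 ≤ e.card)
    (hnoiso : ∀ v ∈ H.verts, ∃ e ∈ H.edges, v ∈ e) (hV : H.verts.Nonempty)
    (h : H.IsBurningSeq us) : H.lazyBurn < us.length := by
  rcases List.eq_nil_or_concat' us with rfl | ⟨us, z, rfl⟩
  · obtain ⟨v, hv⟩ := hV
    rw [← h.2] at hv
    simp [state] at hv
  · calc H.lazyBurn ≤ us.toFinset.card := lazyBurn_le (h.isLazySet_toFinset hsimple hnoiso)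
      _ ≤ us.length := List.toFinset_card_le us
      _ < (us ++ [z]).length := by simp

theorem card_le_indepNum (hX : H.IsIndep X) : X.card ≤ H.indepNum :=
  le_csSup ⟨H.verts.card, by rintro _ ⟨Y, hY, rfl⟩; exact card_le_card hY.1⟩ ⟨X, hX, rfl⟩

theorem mem_step_of_subset_insert (hsimple : ∀ e ∈ H.edges, 2 ≤ e.card) (hX : H.IsIndep X)
    (hXF : X ⊆ F) {w : α} (hw : w ∈ H.verts) {e : Finset α} (he : e ∈ H.edges)
    (heX : e ⊆ insert w X) : w ∈ H.step F := by
  have hwe : w ∈ e := by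
    by_contra hwe
    exact hX.2 e he (erase_eq_of_notMem hwe ▸ subset_insert_iff.1 heX)
  refine mem_union_right _ (mem_filter.2 ⟨hw, e, he, hsimple e he, hwe, ?_⟩)
  exact sdiff_singleton_eq_erase w e ▸ (subset_insert_iff.1 heX).trans hXF

theorem exists_isValidSeq_isIndep_maximal (hsimple : ∀ e ∈ H.edges, 2 ≤ e.card) :
    ∃ us, H.IsValidSeq us ∧ us.Nodup ∧ H.IsIndep us.toFinset ∧
      ∀ v ∈ H.verts \ H.state us, ∃ e ∈ H.edges, e ⊆ insert v us.toFinset := by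
  let P : List α → Prop := fun us => H.IsValidSeq us ∧ us.Nodup ∧ H.IsIndep us.toFinset
  have hP : P [] := ⟨isValidSeq_nil, List.nodup_nil, empty_subset _, fun e he hsub => by
    have := (hsimple e he).trans (card_le_card hsub)
    simp at this⟩
  obtain ⟨us, ⟨hval, hnd, hind⟩, hmin⟩ := (measure fun us => (H.verts \ H.state us).card).wf.has_min
    {us | P us} ⟨[], hP⟩
  refine ⟨us, hval, hnd, hind, fun v hv => ?_⟩
  by_contra! hext
  obtain ⟨hvV, hvs⟩ := mem_sdiff.1 hv
  refine hmin (us ++ [v]) ⟨hval.append_singleton hvV hvs,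
    List.concat_eq_append ▸ (List.nodup_concat us v).2 ⟨fun hvu => hvs (mem_state_of_mem hvu), hnd⟩,
    ?_⟩ ?_
  · rw [show (us ++ [v]).toFinset = insert v us.toFinset by ext; simp]
    exact ⟨insert_subset hvV hind.1, fun e he hsub => hext e he hsub⟩
  · refine card_lt_card ⟨sdiff_subset_sdiff Subset.rfl (state_subset_state_append_singleton us v),
      not_subset.2 ⟨v, hv, ?_⟩⟩
    rw [mem_sdiff, state_append_singleton]
    exact fun h => h.2 (mem_insert_self _ _)

theorem exists_isBurningSeq_length_le_indepNum_add_one (hsimple : ∀ e ∈ H.edges, 2 ≤ e.card) :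
    ∃ us, H.IsBurningSeq us ∧ us.length ≤ H.indepNum + 1 := by
  obtain ⟨us, hval, hnd, hind, hmax⟩ := H.exists_isValidSeq_isIndep_maximal hsimple
  have hlen : us.length ≤ H.indepNum := List.toFinset_card_of_nodup hnd ▸ card_le_indepNum hind
  have hsub : H.state us ⊆ H.verts := state_subset_verts fun _ hu => hval.mem_verts hu
  by_cases hfull : H.verts ⊆ H.state us
  · exact ⟨us, ⟨hval, hsub.antisymm hfull⟩, by omega⟩
  obtain ⟨v, hvV, hvs⟩ := not_subset.1 hfull
  refine ⟨us ++ [v], ⟨hval.append_singleton hvV hvs, ?_⟩, by simpa using hlen⟩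
  rw [state_append_singleton]
  refine (insert_subset hvV (step_subset_verts hsub)).antisymm fun w hw => ?_
  rw [mem_insert]
  by_cases hws : w ∈ H.state us
  · exact .inr (subset_step _ hws)
  by_cases hwv : w = v
  · exact .inl hwv
  obtain ⟨e, he, heX⟩ := hmax w (mem_sdiff.2 ⟨hw, hws⟩)
  exact .inr (mem_step_of_subset_insert hsimple hind (fun _ hu => mem_state_of_mem
    (List.mem_toFinset.1 hu)) hw he heX)

end Hypergraph'

theorem verts_sub_edges_le_lazyBurn_lt_burn_le_indepNum_add_one {α : Type*} [DecidableEq α]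
    (H : Hypergraph' α) (hsimple : ∀ e ∈ H.edges, 2 ≤ e.card)
    (hnoiso : ∀ v ∈ H.verts, ∃ e ∈ H.edges, v ∈ e) (hcard : 2 ≤ H.verts.card) :
    H.verts.card - H.edges.card ≤ H.lazyBurn ∧
    H.lazyBurn < H.burn ∧ H.burn ≤ H.indepNum + 1 := by
  obtain ⟨us, hus, hlen⟩ := H.exists_isBurningSeq_length_le_indepNum_add_one hsimple
  obtain ⟨ub, hub, hub_len⟩ := H.exists_isBurningSeq_length_eq_burn ⟨us, hus⟩
  have hV : H.verts.Nonempty := card_pos.1 (by omega)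
  exact ⟨H.card_verts_sub_card_edges_le_lazyBurn,
    hub_len ▸ H.lazyBurn_lt_length hsimple hnoiso hV hub, (H.burn_le hus).trans hlen⟩
end

section
/- For the tight 3-uniform path H on n ≥ 3 vertices, b(H) = ⌈√(2n−1)⌉. -/
/-!
Lower bound: measure a burned set `F` by the number of ends of its maximal runs, which equals
`|F|` minus the number of edges inside `F`. Propagation never increases it, since every newly
burned vertex completes its own new edge, and a source raises it by at most one; so after `t`
rounds it is at most `t`. In one round every new vertex catches fire next to a run end, and an
isolated point cannot spread by itself, so at most `2 ⌊t / 2⌋` vertices catch fire. Hence after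
`ℓ` rounds at most `(ℓ² + 1) / 2` vertices burn, and `2n ≤ ℓ² + 1`.

Upper bound: given `b` rounds with `2n ≤ b² + 1`, light adjacent pairs of sources in rounds
`2k + 1, 2k + 2`; by round `b` such a pair burns an interval of `2 (b - 2k - 1)` vertices. These
intervals tile the path from the left, with one more single source at the right end if one
vertex is left over. The sources move right faster than the fire does, so each one is still
unburned when it is lit.
-/

open Finset

/-- The 3-uniform tight path on `n` vertices `0, 1, ..., n-1`, with edges
`{i, i+1, i+2}` for `0 ≤ i ≤ n-3`. -/
def tightPath (n : ℕ) : FinHypergraph ℕ where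
  verts := Finset.range n
  edges := (Finset.range (n - 2)).image (fun i => {i, i + 1, i + 2})
  edges_sub := by
    intro e he
    simp only [Finset.mem_image, Finset.mem_range] at he
    obtain ⟨i, hi, rfl⟩ := he
    intro x hx
    simp only [Finset.mem_insert, Finset.mem_singleton] at hx
    simp only [Finset.mem_range]
    rcases hx with rfl | rfl | rfl <;> omega

namespace FinHypergraph

variable {α : Type*} [DecidableEq α] {H : FinHypergraph α}

variable (H) in
def IsSourceSeq (us : List α) : Prop :=
  ∀ i : Fin us.length, us.get i ∈ H.verts ∧ us.get i ∉ H.state (us.take i.1)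

theorem monotone_step : Monotone H.step := by
  intro F G h v hv
  simp only [step, mem_union, mem_filter] at hv ⊢
  rcases hv with hv | ⟨hv, e, he, hcard, hve, hsub⟩
  · exact .inl (h hv)
  · exact .inr ⟨hv, e, he, hcard, hve, hsub.trans h⟩

theorem subset_step (F : Finset α) : F ⊆ H.step F := subset_union_left

theorem subset_iterate_step (k : ℕ) (F : Finset α) : F ⊆ H.step^[k] F :=
  Function.id_le_iterate_of_id_le subset_step k F

theorem step_subset_verts {F : Finset α} (h : F ⊆ H.verts) : H.step F ⊆ H.verts :=
  union_subset h (filter_subset _ _)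

theorem state_append_singleton (us : List α) (u : α) :
    H.state (us ++ [u]) = insert u (H.step (H.state us)) := by
  simp [state]

theorem state_subset_verts {us : List α} (h : ∀ u ∈ us, u ∈ H.verts) :
    H.state us ⊆ H.verts := by
  induction us using List.reverseRecOn with
  | nil => exact empty_subset _
  | append_singleton us u ih =>
    simp only [List.mem_append, List.mem_singleton] at h
    rw [state_append_singleton]
    exact insert_subset (h u (.inr rfl)) (step_subset_verts (ih fun w hw => h w (.inl hw)))

theorem mem_state_of_mem {us : List α} {u : α} (h : u ∈ us) : u ∈ H.state us := by
  induction us using List.reverseRecOn with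
  | nil => simp at h
  | append_singleton us w ih =>
    rw [state_append_singleton]
    rcases List.mem_append.1 h with h | h
    · exact mem_insert_of_mem (subset_step _ (ih h))
    · exact List.mem_singleton.1 h ▸ mem_insert_self _ _

theorem iterate_step_state_subset_state_append (us vs : List α) :
    H.step^[vs.length] (H.state us) ⊆ H.state (us ++ vs) := by
  induction vs using List.reverseRecOn with
  | nil => simp
  | append_singleton vs u ih =>
    rw [← List.append_assoc, state_append_singleton, List.length_append, List.length_singleton,
      Function.iterate_succ_apply']
    exact (monotone_step ih).trans (subset_insert _ _)

theorem iterate_step_state_take_subset (us : List α) (m : ℕ) :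
    H.step^[us.length - m] (H.state (us.take m)) ⊆ H.state us := by
  simpa using iterate_step_state_subset_state_append (H := H) (us.take m) (us.drop m)

theorem isSourceSeq_append_singleton {us : List α} {u : α} :
    H.IsSourceSeq (us ++ [u]) ↔ H.IsSourceSeq us ∧ u ∈ H.verts ∧ u ∉ H.state us := by
  simp only [IsSourceSeq, Fin.forall_iff, List.get_eq_getElem, List.length_append,
    List.length_singleton]
  constructor
  · intro h
    refine ⟨fun i hi => ?_, by simpa using h us.length (by omega)⟩
    simpa [List.getElem_append_left hi, List.take_append_of_le_length hi.le] using h i (by omega)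
  · rintro ⟨h, hu⟩ i hi
    rcases Nat.lt_succ_iff_lt_or_eq.1 hi with hi | rfl
    · simpa [List.getElem_append_left hi, List.take_append_of_le_length hi.le] using h i hi
    · simpa using hu

theorem IsSourceSeq.mem_verts {us : List α} (h : H.IsSourceSeq us) : ∀ u ∈ us, u ∈ H.verts := by
  intro u hu
  obtain ⟨i, hi, rfl⟩ := List.getElem_of_mem hu
  exact (h ⟨i, hi⟩).1

theorem IsSourceSeq.exists_isBurningSeq {us : List α} (h : H.IsSourceSeq us) {k : ℕ}
    (hk : H.verts ⊆ H.step^[k] (H.state us)) :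
    ∃ ws, H.IsBurningSeq ws ∧ ws.length ≤ us.length + k := by
  induction k generalizing us with
  | zero => exact ⟨us, ⟨h, (state_subset_verts h.mem_verts).antisymm hk⟩, by simp⟩
  | succ k ih =>
    by_cases hall : H.verts ⊆ H.state us
    · exact ⟨us, ⟨h, (state_subset_verts h.mem_verts).antisymm hall⟩, by omega⟩
    obtain ⟨u, hu, hu'⟩ := not_subset.1 hall
    have hk' : H.verts ⊆ H.step^[k] (H.state (us ++ [u])) := by
      rw [state_append_singleton]
      refine hk.trans ?_
      rw [Function.iterate_succ_apply]
      exact (monotone_step.iterate k) (subset_insert _ _)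
    obtain ⟨ws, hws, hlen⟩ := ih (isSourceSeq_append_singleton.2 ⟨h, hu, hu'⟩) hk'
    exact ⟨ws, hws, by simp only [List.length_append, List.length_singleton] at hlen; omega⟩

/-- A vertex that catches fire completes an edge not yet inside the burned set, and two new
vertices cannot complete the same edge. -/
theorem card_step_add_card_edges_le (F : Finset α) :
    (H.step F).card + (H.edges.filter (· ⊆ F)).card ≤
      F.card + (H.edges.filter (· ⊆ H.step F)).card := by
  have hnew : (H.step F \ F).card ≤
      (H.edges.filter (· ⊆ H.step F) \ H.edges.filter (· ⊆ F)).card := by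
    refine card_le_card_of_forall_subsingleton (fun v e => v ∈ e ∧ e \ {v} ⊆ F) ?_ ?_
    · intro v hv
      obtain ⟨hv, hvF⟩ := mem_sdiff.1 hv
      obtain ⟨-, e, he, -, hve, hsub⟩ := mem_filter.1 ((mem_union.1 hv).resolve_left hvF)
      refine ⟨e, ?_, hve, hsub⟩
      simp only [mem_sdiff, mem_filter]
      refine ⟨⟨he, fun w hw => ?_⟩, fun h => hvF (h.2 hve)⟩
      by_cases hwv : w = v
      · exact hwv ▸ hv
      · exact subset_step F (hsub (mem_sdiff.2 ⟨hw, by simpa using hwv⟩))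
    · rintro e - v ⟨hv, hve, -⟩ w ⟨-, hwe, hsub⟩
      by_contra hne
      exact (mem_sdiff.1 hv).2 (hsub (mem_sdiff.2 ⟨hve, by simpa using hne⟩))
  have hsub : H.edges.filter (· ⊆ F) ⊆ H.edges.filter (· ⊆ H.step F) := fun e he => by
    simp only [mem_filter] at he ⊢
    exact ⟨he.1, he.2.trans (subset_step F)⟩
  have h1 := card_sdiff_add_card_eq_card (subset_step (H := H) F)
  have h2 := card_sdiff_add_card_eq_card hsub
  omega

end FinHypergraph

namespace TightPath

open FinHypergraph

variable {n : ℕ}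

theorem mem_edges {e : Finset ℕ} :
    e ∈ (tightPath n).edges ↔ ∃ i, i + 2 < n ∧ {i, i + 1, i + 2} = e := by
  simp only [tightPath, mem_image, mem_range]
  exact exists_congr fun i => and_congr_left' (by omega)

theorem card_triple (i : ℕ) : ({i, i + 1, i + 2} : Finset ℕ).card = 3 := by
  rw [card_insert_of_notMem (by simp), card_insert_of_notMem (by simp), card_singleton]

theorem mem_step {F : Finset ℕ} {v : ℕ} :
    v ∈ (tightPath n).step F ↔ v ∈ F ∨ ∃ i, i + 2 < n ∧
      (v = i ∧ i + 1 ∈ F ∧ i + 2 ∈ F ∨ v = i + 1 ∧ i ∈ F ∧ i + 2 ∈ F ∨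
        v = i + 2 ∧ i ∈ F ∧ i + 1 ∈ F) := by
  have hverts : (tightPath n).verts = range n := rfl
  simp only [FinHypergraph.step, mem_union, mem_filter, mem_edges, hverts, mem_range,
    exists_exists_and_eq_and, card_triple, subset_iff, mem_sdiff, mem_insert, mem_singleton]
  refine or_congr_right ⟨?_, ?_⟩
  · rintro ⟨-, i, hi, -, hvi, hF⟩
    refine ⟨i, hi, ?_⟩
    rcases hvi with rfl | rfl | rfl
    · exact .inl ⟨rfl, hF ⟨by simp, by omega⟩, hF ⟨by simp, by omega⟩⟩
    · exact .inr (.inl ⟨rfl, hF ⟨by simp, by omega⟩, hF ⟨by simp, by omega⟩⟩)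
    · exact .inr (.inr ⟨rfl, hF ⟨by simp, by omega⟩, hF ⟨by simp, by omega⟩⟩)
  · rintro ⟨i, hi, h⟩
    have hvi : v = i ∨ v = i + 1 ∨ v = i + 2 := by
      rcases h with ⟨h, -⟩ | ⟨h, -⟩ | ⟨h, -⟩ <;> simp [h]
    refine ⟨by omega, i, hi, by norm_num, hvi, ?_⟩
    rintro x ⟨rfl | rfl | rfl, hx⟩ <;> rcases h with ⟨rfl, h⟩ | ⟨rfl, h⟩ | ⟨rfl, h⟩ <;> simp_all

theorem state_subset_range {us : List ℕ} (hus : ∀ u ∈ us, u < n) :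
    (tightPath n).state us ⊆ range n :=
  state_subset_verts fun u hu => mem_range.2 (hus u hu)

/-! ### Runs of a set of naturals -/

def leftEnds (F : Finset ℕ) : Finset ℕ := F.filter fun v => v = 0 ∨ v - 1 ∉ F

def rightEnds (F : Finset ℕ) : Finset ℕ := F.filter fun v => v + 1 ∉ F

/-- The endpoints of the maximal runs of consecutive elements of `F`: two for every run of
length at least two, one for every isolated point. -/
def ends (F : Finset ℕ) : Finset ℕ := leftEnds F ∪ rightEnds F

theorem ends_subset (F : Finset ℕ) : ends F ⊆ F :=
  union_subset (filter_subset _ F) (filter_subset _ F)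

theorem card_leftEnds (F : Finset ℕ) : (leftEnds F).card = (rightEnds F).card := by
  have hl := card_filter_add_card_filter_not (s := F) fun v => v = 0 ∨ v - 1 ∉ F
  have hr := card_filter_add_card_filter_not (s := F) fun v => v + 1 ∉ F
  have hshift : (F.filter fun v => ¬(v = 0 ∨ v - 1 ∉ F)).card =
      (F.filter fun v => ¬v + 1 ∉ F).card := by
    refine card_nbij' (· - 1) (· + 1) ?_ ?_ ?_ ?_ <;> intro v hv <;>
      simp only [coe_filter, Set.mem_ofPred_eq, not_or, not_not] at hv ⊢
    · exact ⟨hv.2.2, by rw [Nat.sub_add_cancel (Nat.pos_of_ne_zero hv.2.1)]; exact hv.1⟩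
    · exact ⟨hv.2, by omega, by simpa using hv.1⟩
    · omega
    · omega
  rw [leftEnds, rightEnds]
  omega

theorem card_ends_add_card_inter (F : Finset ℕ) :
    (ends F).card + (leftEnds F ∩ rightEnds F).card = 2 * (rightEnds F).card := by
  rw [ends, card_union_add_card_inter, card_leftEnds, two_mul]

theorem card_ends_add_card_edges {F : Finset ℕ} (hF : F ⊆ range n) :
    (ends F).card + ((tightPath n).edges.filter (· ⊆ F)).card = F.card := by
  suffices (F \ ends F).card = ((tightPath n).edges.filter (· ⊆ F)).card by
    have := card_sdiff_add_card_eq_card (ends_subset F)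
    omega
  refine card_bij (fun v _ => {v - 1, v, v + 1}) ?_ ?_ ?_
  · intro v hv
    simp only [ends, leftEnds, rightEnds, mem_sdiff, mem_union, mem_filter, not_or, not_and,
      not_not] at hv
    obtain ⟨hvF, hl, hr⟩ := hv
    obtain ⟨i, rfl⟩ : ∃ i, v = i + 1 := ⟨v - 1, by have := hl hvF; omega⟩
    have hi := mem_range.1 (hF (hr hvF))
    simp only [mem_filter, mem_edges, add_tsub_cancel_right, add_assoc, Nat.reduceAdd]
    refine ⟨⟨i, by omega, rfl⟩, ?_⟩
    simp only [insert_subset_iff, singleton_subset_iff]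
    exact ⟨(hl hvF).2, hvF, hr hvF⟩
  · intro a ha b hb hab
    have ha' := mem_sdiff.1 ha
    have hb' := mem_sdiff.1 hb
    simp only [ends, leftEnds, mem_union, mem_filter, not_or] at ha' hb'
    have h1 : a + 1 ∈ ({b - 1, b, b + 1} : Finset ℕ) := hab ▸ by simp
    have h2 : b + 1 ∈ ({a - 1, a, a + 1} : Finset ℕ) := hab ▸ by simp
    simp only [mem_insert, mem_singleton] at h1 h2
    omega
  · intro e he
    obtain ⟨he, heF⟩ := mem_filter.1 he
    obtain ⟨i, -, rfl⟩ := mem_edges.1 he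
    simp only [insert_subset_iff, singleton_subset_iff] at heF
    refine ⟨i + 1, ?_, by simp [add_assoc]⟩
    simp [ends, leftEnds, rightEnds, heF, add_assoc]

/-! ### The lower bound -/

theorem card_ends_step_le {F : Finset ℕ} (hF : F ⊆ range n) :
    (ends ((tightPath n).step F)).card ≤ (ends F).card := by
  have h1 := card_ends_add_card_edges hF
  have h2 := card_ends_add_card_edges (step_subset_verts hF : (tightPath n).step F ⊆ range n)
  have h3 := card_step_add_card_edges_le (H := tightPath n) F
  omega

theorem card_ends_insert_le {F : Finset ℕ} (hF : F ⊆ range n) {u : ℕ} (hu : u < n) :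
    (ends (insert u F)).card ≤ (ends F).card + 1 := by
  have h1 := card_ends_add_card_edges hF
  have h2 := card_ends_add_card_edges (insert_subset (mem_range.2 hu) hF)
  have h3 : ((tightPath n).edges.filter (· ⊆ F)).card ≤
      ((tightPath n).edges.filter (· ⊆ insert u F)).card :=
    card_le_card fun e he => by
      simp only [mem_filter] at he ⊢
      exact ⟨he.1, he.2.trans (subset_insert u F)⟩
  have h4 := card_insert_le u F
  omega

theorem card_ends_state_le {us : List ℕ} (hus : ∀ u ∈ us, u < n) :
    (ends ((tightPath n).state us)).card ≤ us.length := by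
  induction us using List.reverseRecOn with
  | nil => simp [state, ends, leftEnds, rightEnds]
  | append_singleton us u ih =>
    simp only [List.mem_append, List.mem_singleton] at hus
    have hus' : ∀ w ∈ us, w < n := fun w hw => hus w (.inl hw)
    have hsub := state_subset_range hus'
    have h1 := card_ends_insert_le
      (step_subset_verts hsub : (tightPath n).step _ ⊆ range n) (hus u (.inr rfl))
    have h2 := card_ends_step_le hsub
    have h3 := ih hus'
    rw [state_append_singleton, List.length_append, List.length_singleton]
    omega

theorem add_one_mem_of_mem_step_sdiff {F : Finset ℕ} {v : ℕ}
    (hv : v ∈ (tightPath n).step F \ F) (hv' : v - 1 ∉ F) : v + 1 ∈ F ∧ v + 2 ∈ F := by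
  obtain ⟨hv, hvF⟩ := mem_sdiff.1 hv
  rcases mem_step.1 hv with h | ⟨i, -, ⟨rfl, h⟩ | ⟨rfl, h, -⟩ | ⟨rfl, -, h⟩⟩
  · exact absurd h hvF
  · exact h
  · exact absurd (by simpa using h) hv'
  · exact absurd (by simpa using h) hv'

/-- The run end next to which a newly burned vertex `v` caught fire. -/
def igniter (F : Finset ℕ) (v : ℕ) : ℕ := if v - 1 ∈ F then v - 1 else v + 1

theorem igniter_mem_ends {F : Finset ℕ} {v : ℕ} (hv : v ∈ (tightPath n).step F \ F) :
    igniter F v ∈ ends F := by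
  have hvF := (mem_sdiff.1 hv).2
  unfold igniter
  split_ifs with h
  · have hv0 : v ≠ 0 := by rintro rfl; exact hvF h
    refine mem_union_right _ (mem_filter.2 ⟨h, ?_⟩)
    rwa [Nat.sub_add_cancel (Nat.pos_of_ne_zero hv0)]
  · exact mem_union_left _
      (mem_filter.2 ⟨(add_one_mem_of_mem_step_sdiff hv h).1, .inr (by simpa using hvF)⟩)

theorem injOn_igniter {F : Finset ℕ} :
    Set.InjOn (igniter F) ((tightPath n).step F \ F : Finset ℕ) := by
  intro v hv w hw hvw
  have hvF := (mem_sdiff.1 hv).2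
  have hwF := (mem_sdiff.1 hw).2
  unfold igniter at hvw
  split_ifs at hvw with h1 h2 h2
  · have : v ≠ 0 := by rintro rfl; exact hvF h1
    have : w ≠ 0 := by rintro rfl; exact hwF h2
    omega
  · have := (add_one_mem_of_mem_step_sdiff hw h2).2
    rw [show w + 2 = v by omega] at this
    exact absurd this hvF
  · have := (add_one_mem_of_mem_step_sdiff hv h1).2
    rw [show v + 2 = w by omega] at this
    exact absurd this hwF
  · omega

/-- An isolated point cannot spread on its own: if `F` has one, then the largest one `s`, or
else the start `s + 2` of the run right after it, is an end that no new vertex is charged to. -/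
theorem exists_mem_ends_forall_igniter_ne {F : Finset ℕ} (h : (leftEnds F ∩ rightEnds F).Nonempty) :
    ∃ e ∈ ends F, ∀ v ∈ (tightPath n).step F \ F, igniter F v ≠ e := by
  obtain ⟨s, hs, hmax⟩ : ∃ s ∈ leftEnds F ∩ rightEnds F, ∀ t ∈ leftEnds F ∩ rightEnds F, t ≤ s :=
    ⟨_, max'_mem _ h, fun t ht => le_max' _ t ht⟩
  have hsl : s ∈ leftEnds F := (mem_inter.1 hs).1
  obtain ⟨hsF, hsr⟩ := mem_filter.1 (mem_inter.1 hs).2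
  by_cases hs2 : s + 2 ∈ F
  · have hs3 : s + 3 ∈ F := by
      by_contra hs3
      have := hmax (s + 2) (by simp [leftEnds, rightEnds, hs2, hsr, hs3])
      omega
    refine ⟨s + 2, mem_union_left _ (mem_filter.2 ⟨hs2, .inr (by simpa using hsr)⟩), ?_⟩
    intro v hv hve
    have hvF := (mem_sdiff.1 hv).2
    unfold igniter at hve
    split_ifs at hve with h1
    · exact hvF (by rwa [show v = s + 3 by omega])
    · exact h1 (by rwa [show v - 1 = s by omega])
  · refine ⟨s, mem_union_left _ hsl, ?_⟩
    intro v hv hve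
    obtain ⟨hv', hvF⟩ := mem_sdiff.1 hv
    unfold igniter at hve
    split_ifs at hve with h1
    · have hv0 : v ≠ 0 := by rintro rfl; exact hvF h1
      rcases mem_step.1 hv' with h | ⟨i, -, ⟨hi, h, -⟩ | ⟨hi, -, h⟩ | ⟨hi, h, -⟩⟩
      · exact hvF h
      · exact hs2 (by rwa [show s + 2 = i + 1 by omega])
      · exact hs2 (by rwa [show s + 2 = i + 2 by omega])
      · obtain ⟨-, hsl | hsl⟩ := mem_filter.1 hsl
        · omega
        · exact hsl (by rwa [show s - 1 = i by omega])
    · have := (add_one_mem_of_mem_step_sdiff hv h1).2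
      exact hsr (by rwa [show s + 1 = v + 2 by omega])

theorem card_sdiff_step_le (F : Finset ℕ) :
    ((tightPath n).step F \ F).card ≤ 2 * ((ends F).card / 2) := by
  have hpar := card_ends_add_card_inter F
  rcases (leftEnds F ∩ rightEnds F).eq_empty_or_nonempty with h | h
  · have := card_le_card_of_injOn (igniter F) (fun v hv => igniter_mem_ends (n := n) hv)
      injOn_igniter
    rw [h, card_empty] at hpar
    omega
  · obtain ⟨e, he, hne⟩ := exists_mem_ends_forall_igniter_ne (n := n) h
    have := card_le_card_of_injOn (igniter F) (t := (ends F).erase e)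
      (fun v hv => mem_erase.2 ⟨hne v hv, igniter_mem_ends hv⟩) injOn_igniter
    rw [card_erase_of_mem he] at this
    omega

theorem card_state_le {us : List ℕ} (hus : ∀ u ∈ us, u < n) :
    ((tightPath n).state us).card ≤ (us.length ^ 2 + 1) / 2 := by
  induction us using List.reverseRecOn with
  | nil => simp [state]
  | append_singleton us u ih =>
    simp only [List.mem_append, List.mem_singleton] at hus
    have hus' : ∀ w ∈ us, w < n := fun w hw => hus w (.inl hw)
    have h1 := card_sdiff_add_card_eq_card (subset_step (H := tightPath n) ((tightPath n).state us))
    have h2 := card_sdiff_step_le (n := n) ((tightPath n).state us)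
    have h3 : (ends ((tightPath n).state us)).card / 2 ≤ us.length / 2 :=
      Nat.div_le_div_right (card_ends_state_le hus')
    have h4 := card_insert_le u ((tightPath n).step ((tightPath n).state us))
    have h5 := ih hus'
    have h6 (t : ℕ) : (t ^ 2 + 1) / 2 + 2 * (t / 2) + 1 ≤ ((t + 1) ^ 2 + 1) / 2 := by
      obtain ⟨m, rfl | rfl⟩ := Nat.even_or_odd' t <;> ring_nf <;> omega
    have := h6 us.length
    rw [state_append_singleton, List.length_append, List.length_singleton]
    omega

theorem two_mul_le_of_isBurningSeq {us : List ℕ} (h : (tightPath n).IsBurningSeq us) :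
    2 * n ≤ us.length ^ 2 + 1 := by
  have hcard := card_state_le fun u hu => mem_range.1 (IsSourceSeq.mem_verts h.1 u hu)
  rw [h.2] at hcard
  simp only [tightPath, card_range] at hcard
  omega

/-! ### The upper bound -/

theorem exists_le_add_one_of_mem_step {F : Finset ℕ} {v : ℕ} (h : v ∈ (tightPath n).step F) :
    ∃ w ∈ F, v ≤ w + 1 := by
  rcases mem_step.1 h with h | ⟨i, -, ⟨hi, h, -⟩ | ⟨hi, h, -⟩ | ⟨hi, -, h⟩⟩
  · exact ⟨v, h, by omega⟩
  · exact ⟨i + 1, h, by omega⟩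
  · exact ⟨i, h, by omega⟩
  · exact ⟨i + 1, h, by omega⟩

theorem lt_of_mem_state_map_range {f : ℕ → ℕ} {ℓ v : ℕ} (hf : ∀ i < ℓ, f i < f (i + 1))
    (hv : v ∈ (tightPath n).state ((List.range ℓ).map f)) : v < f ℓ := by
  induction ℓ generalizing v with
  | zero => simp [state] at hv
  | succ ℓ ih =>
    rw [List.range_succ, List.map_append, List.map_singleton, state_append_singleton] at hv
    have hℓ := hf ℓ (by omega)
    rcases mem_insert.1 hv with rfl | hv
    · exact hℓ
    · obtain ⟨w, hw, hvw⟩ := exists_le_add_one_of_mem_step hv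
      have := ih (fun i hi => hf i (by omega)) hw
      omega

theorem isSourceSeq_map_range {f : ℕ → ℕ} {ℓ : ℕ} (hf : ∀ i, i + 1 < ℓ → f i < f (i + 1))
    (hlt : ∀ i < ℓ, f i < n) : (tightPath n).IsSourceSeq ((List.range ℓ).map f) := by
  induction ℓ with
  | zero => exact fun i => absurd i.2 (by simp)
  | succ ℓ ih =>
    rw [List.range_succ, List.map_append, List.map_singleton, isSourceSeq_append_singleton]
    refine ⟨ih (fun i hi => hf i (by omega)) (fun i hi => hlt i (by omega)),
      mem_range.2 (hlt ℓ (by omega)), fun h => ?_⟩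
    exact lt_irrefl _ (lt_of_mem_state_map_range (fun i hi => hf i (by omega)) h)

theorem Icc_subset_step {F : Finset ℕ} {a b : ℕ} (hab : a < b) (hbn : b < n)
    (h : Icc a b ⊆ F) : Icc (a - 1) (min (b + 1) (n - 1)) ⊆ (tightPath n).step F := by
  have hF : ∀ w, a ≤ w → w ≤ b → w ∈ F := fun w h1 h2 => h (mem_Icc.2 ⟨h1, h2⟩)
  intro v hv
  rw [mem_Icc] at hv
  rw [mem_step]
  by_cases hva : a ≤ v
  · by_cases hvb : v ≤ b
    · exact .inl (hF v hva hvb)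
    · refine .inr ⟨b - 1, by omega, .inr (.inr ⟨by omega, ?_, ?_⟩)⟩ <;> apply hF <;> omega
  · refine .inr ⟨v, by omega, .inl ⟨rfl, ?_, ?_⟩⟩ <;> apply hF <;> omega

theorem Icc_subset_iterate_step {F : Finset ℕ} {a b : ℕ} (hab : a < b) (hbn : b < n)
    (h : Icc a b ⊆ F) (k : ℕ) :
    Icc (a - k) (min (b + k) (n - 1)) ⊆ (tightPath n).step^[k] F := by
  induction k with
  | zero => simpa [show min b (n - 1) = b by omega] using h
  | succ k ih =>
    rw [Function.iterate_succ_apply']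
    have := Icc_subset_step (n := n) (a := a - k) (b := min (b + k) (n - 1)) (by omega)
      (by omega) ih
    rwa [show a - k - 1 = a - (k + 1) by omega,
      show min (min (b + k) (n - 1) + 1) (n - 1) = min (b + (k + 1)) (n - 1) by omega] at this

/-- With `b` rounds, the `k`-th adjacent pair of sources (`k = 0, 1, …`), lit in rounds `2k + 1`
and `2k + 2`, burns `2 (b - 2k - 1)` vertices; `pairsCover b k` is the total for the first
`k` pairs. -/
def pairsCover (b k : ℕ) : ℕ := 2 * k * (b - k)

theorem pairsCover_succ {b k : ℕ} (h : 2 * k + 1 ≤ b) :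
    pairsCover b (k + 1) = pairsCover b k + 2 * (b - 2 * k - 1) := by
  obtain ⟨c, rfl⟩ : ∃ c, b = 2 * k + 1 + c := ⟨b - (2 * k + 1), by omega⟩
  rw [pairsCover, pairsCover, show 2 * k + 1 + c - (k + 1) = k + c by omega,
    show 2 * k + 1 + c - k = k + 1 + c by omega, show 2 * k + 1 + c - 2 * k - 1 = c by omega]
  ring

theorem two_mul_pairsCover_half (b : ℕ) : 2 * pairsCover b (b / 2) + b % 2 = b ^ 2 := by
  obtain ⟨m, rfl | rfl⟩ := Nat.even_or_odd' b
  · rw [pairsCover, show 2 * m / 2 = m by omega, show 2 * m - m = m by omega,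
      show 2 * m % 2 = 0 by omega]
    ring
  · rw [pairsCover, show (2 * m + 1) / 2 = m by omega, show 2 * m + 1 - m = m + 1 by omega,
      show (2 * m + 1) % 2 = 1 by omega]
    ring

/-- The left vertex of the `k`-th pair, placed so that the pair burns exactly the vertices in
`[pairsCover b k, pairsCover b (k + 1))`; a pair that would stick out of the path is pushed
back to its last two vertices. -/
def pairPos (n b k : ℕ) : ℕ := min (pairsCover b k + (b - 2 * k - 2)) (n - 2)

/-- `p` pairs, followed by a single source at `n - 1` if that vertex is not covered by them. -/
def numSources (n b p : ℕ) : ℕ := if n ≤ pairsCover b p then 2 * p else 2 * p + 1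

def pairSource (n b p i : ℕ) : ℕ := if i < 2 * p then pairPos n b (i / 2) + i % 2 else n - 1

def pairSources (n b p : ℕ) : List ℕ := (List.range (numSources n b p)).map (pairSource n b p)

variable {b p : ℕ}

theorem pairPos_add_one_lt (hmin : ∀ k < p, pairsCover b k + 2 ≤ n) (hpb : 2 * p ≤ b) {k : ℕ}
    (hk : k + 1 < p) : pairPos n b k + 1 < pairPos n b (k + 1) := by
  have h1 := pairsCover_succ (b := b) (k := k) (by omega)
  have h2 := hmin (k + 1) hk
  unfold pairPos
  omega

theorem pairPos_add_two_le (hmin : ∀ k < p, pairsCover b k + 2 ≤ n) {k : ℕ} (hk : k < p) :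
    pairPos n b k + 2 ≤ n := by
  have := hmin k hk
  unfold pairPos
  omega

theorem pairPos_pred_add_two_lt (hn : pairsCover b p < n) (hp : n ≤ pairsCover b p + 1)
    (hpb : 2 * p ≤ b) (hp0 : 0 < p) : pairPos n b (p - 1) + 2 < n := by
  have h1 := pairsCover_succ (b := b) (k := p - 1) (by omega)
  rw [Nat.sub_add_cancel hp0] at h1
  unfold pairPos
  omega

theorem pairSource_two_mul {k : ℕ} (hk : k < p) : pairSource n b p (2 * k) = pairPos n b k := by
  rw [pairSource, if_pos (by omega), Nat.mul_div_cancel_left k two_pos, Nat.mul_mod_right,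
    add_zero]

theorem pairSource_two_mul_add_one {k : ℕ} (hk : k < p) :
    pairSource n b p (2 * k + 1) = pairPos n b k + 1 := by
  rw [pairSource, if_pos (by omega), show (2 * k + 1) / 2 = k by omega,
    show (2 * k + 1) % 2 = 1 by omega]

theorem pairSource_lt_succ (hp : n ≤ pairsCover b p + 1) (hmin : ∀ k < p, pairsCover b k + 2 ≤ n)
    (hpb : 2 * p ≤ b) {i : ℕ} (hi : i + 1 < numSources n b p) :
    pairSource n b p i < pairSource n b p (i + 1) := by
  have hi' : i + 1 ≤ 2 * p ∧ (i + 1 = 2 * p → pairsCover b p < n) := by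
    unfold numSources at hi
    split_ifs at hi <;> omega
  obtain ⟨k, rfl | rfl⟩ := Nat.even_or_odd' i
  · rw [pairSource_two_mul (by omega), pairSource_two_mul_add_one (by omega)]
    omega
  · rw [pairSource_two_mul_add_one (by omega)]
    rcases Nat.lt_or_ge (k + 1) p with hk | hk
    · rw [show 2 * k + 1 + 1 = 2 * (k + 1) by ring, pairSource_two_mul hk]
      exact pairPos_add_one_lt hmin hpb hk
    · have hkp : k = p - 1 := by omega
      rw [pairSource, if_neg (by omega), hkp]
      have := pairPos_pred_add_two_lt (hi'.2 (by omega)) hp hpb (by omega)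
      omega

theorem pairSource_lt (hmin : ∀ k < p, pairsCover b k + 2 ≤ n) {i : ℕ}
    (hi : i < numSources n b p) : pairSource n b p i < n := by
  unfold pairSource
  split_ifs with h
  · have := pairPos_add_two_le hmin (k := i / 2) (by omega)
    omega
  · unfold numSources at hi
    split_ifs at hi with hn <;> omega

theorem isSourceSeq_pairSources (hp : n ≤ pairsCover b p + 1)
    (hmin : ∀ k < p, pairsCover b k + 2 ≤ n) (hpb : 2 * p ≤ b) :
    (tightPath n).IsSourceSeq (pairSources n b p) :=
  isSourceSeq_map_range (fun _ hi => pairSource_lt_succ hp hmin hpb hi)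
    (fun _ hi => pairSource_lt hmin hi)

theorem mem_iterate_step_state_pairSources (hmin : ∀ k < p, pairsCover b k + 2 ≤ n)
    (hpb : 2 * p ≤ b) (hb : numSources n b p ≤ b) {k : ℕ} (hk : k ≤ p) {v : ℕ} (hvn : v < n)
    (hvk : v < pairsCover b k) :
    v ∈ (tightPath n).step^[b - numSources n b p] ((tightPath n).state (pairSources n b p)) := by
  induction k with
  | zero => simp [pairsCover] at hvk
  | succ k ih =>
    rcases Nat.lt_or_ge v (pairsCover b k) with hv | hv
    · exact ih (by omega) hv
    have hℓ : 2 * k + 2 ≤ numSources n b p := by unfold numSources; split_ifs <;> omega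
    set c := pairPos n b k
    have hc := pairPos_add_two_le hmin (k := k) (by omega)
    have htake : (pairSources n b p).take (2 * k + 2) =
        (List.range (2 * k + 2)).map (pairSource n b p) := by
      rw [pairSources, ← List.map_take, List.take_range, min_eq_left hℓ]
    have hpair : Icc c (c + 1) ⊆ (tightPath n).state ((pairSources n b p).take (2 * k + 2)) := by
      intro w hw
      rw [htake]
      apply mem_state_of_mem
      rw [List.mem_map]
      rcases (show w = c ∨ w = c + 1 by rw [mem_Icc] at hw; omega) with rfl | rfl
      · exact ⟨2 * k, List.mem_range.2 (by omega), pairSource_two_mul (by omega)⟩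
      · exact ⟨2 * k + 1, List.mem_range.2 (by omega), pairSource_two_mul_add_one (by omega)⟩
    have hspread := Icc_subset_iterate_step (n := n) (by omega) (by omega) hpair (b - 2 * k - 2)
    have hlater := iterate_step_state_take_subset (H := tightPath n) (pairSources n b p) (2 * k + 2)
    rw [show (pairSources n b p).length = numSources n b p by simp [pairSources]] at hlater
    have hiter : (tightPath n).step^[b - 2 * k - 2]
        ((tightPath n).state ((pairSources n b p).take (2 * k + 2))) ⊆
        (tightPath n).step^[b - numSources n b p] ((tightPath n).state (pairSources n b p)) := by
      rw [show b - 2 * k - 2 = (b - numSources n b p) + (numSources n b p - (2 * k + 2)) by omega,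
        Function.iterate_add_apply]
      exact (monotone_step.iterate _) hlater
    have h1 := pairsCover_succ (b := b) (k := k) (by omega)
    apply hiter (hspread (mem_Icc.2 ⟨?_, ?_⟩)) <;> unfold c pairPos <;> omega

theorem exists_isBurningSeq_length_le (h : 2 * n ≤ b ^ 2 + 1) :
    ∃ us, (tightPath n).IsBurningSeq us ∧ us.length ≤ b := by
  have hhalf := two_mul_pairsCover_half b
  have hex : ∃ k, n ≤ pairsCover b k + 1 := ⟨b / 2, by omega⟩
  set p := Nat.find hex
  have hp : n ≤ pairsCover b p + 1 := Nat.find_spec hex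
  have hpb : p ≤ b / 2 := Nat.find_min' hex (by omega)
  have hmin : ∀ k < p, pairsCover b k + 2 ≤ n := fun k hk => by
    have := Nat.find_min hex hk
    omega
  have hb : numSources n b p ≤ b := by
    unfold numSources
    split_ifs with hn
    · omega
    · by_contra hb
      rw [show b / 2 = p by omega] at hhalf
      omega
  have hcover : (tightPath n).verts ⊆
      (tightPath n).step^[b - numSources n b p] ((tightPath n).state (pairSources n b p)) := by
    intro v hv
    have hvn : v < n := mem_range.1 hv
    rcases Nat.lt_or_ge v (pairsCover b p) with hvp | hvp
    · exact mem_iterate_step_state_pairSources hmin (by omega) hb le_rfl hvn hvp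
    · have hns : numSources n b p = 2 * p + 1 := if_neg (by omega)
      refine subset_iterate_step _ _ (mem_state_of_mem (List.mem_map.2 ⟨2 * p, ?_, ?_⟩))
      · simp [hns]
      · rw [pairSource, if_neg (by omega)]
        omega
  obtain ⟨us, hus, hlen⟩ := (isSourceSeq_pairSources hp hmin (by omega)).exists_isBurningSeq hcover
  exact ⟨us, hus, by simp only [pairSources, List.length_map, List.length_range] at hlen; omega⟩

end TightPath

theorem ceil_sqrt_two_mul_sub_one_le_iff (n b : ℕ) :
    ⌈√(2 * (n : ℝ) - 1)⌉₊ ≤ b ↔ 2 * n ≤ b ^ 2 + 1 := by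
  rw [Nat.ceil_le, Real.sqrt_le_left (Nat.cast_nonneg _), sub_le_iff_le_add]
  exact_mod_cast Iff.rfl

theorem burn_tightPath_general (n : ℕ) :
    (tightPath n).burn = ⌈Real.sqrt (2 * (n : ℝ) - 1)⌉₊ := by
  obtain ⟨us, hus, hlen⟩ :=
    TightPath.exists_isBurningSeq_length_le ((ceil_sqrt_two_mul_sub_one_le_iff n _).1 le_rfl)
  have hmem : us.length ∈ {m | ∃ ws, (tightPath n).IsBurningSeq ws ∧ ws.length = m} :=
    ⟨us, hus, rfl⟩
  refine le_antisymm ((Nat.sInf_le hmem).trans hlen) ?_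
  obtain ⟨ws, hws, hlen'⟩ := Nat.sInf_mem ⟨_, hmem⟩
  rw [FinHypergraph.burn, ← hlen', ceil_sqrt_two_mul_sub_one_le_iff]
  exact TightPath.two_mul_le_of_isBurningSeq hws

theorem burn_tightPath (n : ℕ) (hn : 3 ≤ n) :
    (tightPath n).burn = ⌈Real.sqrt (2 * (n : ℝ) - 1)⌉₊ :=
  burn_tightPath_general n
end

section
/- For every k ∈ ℕ there exists a hypergraph H with b(H) − b_L(H) > k, and a hypergraph H' with b(H')/b_L(H') > k. -/
open Finset

/-- A hypergraph: a finite vertex set together with a finite set of edges,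
each edge being a subset of the vertex set. -/
structure BurnHypergraph (α : Type*) [DecidableEq α] where
  verts : Finset α
  edges : Finset (Finset α)
  edges_sub : ∀ e ∈ edges, e ⊆ verts

namespace BurnHypergraph

variable {α : Type*} [DecidableEq α]

/-- `Burns H S v`: starting from the initially burned set `S`, the vertex `v`
eventually burns under the propagation rule: an unburned vertex `v` catches fire
when some non-singleton edge `e ∋ v` has all of `e \ {v}` burned. -/
inductive Burns (H : BurnHypergraph α) (S : Finset α) : α → Prop
  | init {v : α} : v ∈ S → Burns H S v
  | prop {v : α} {e : Finset α} : v ∈ H.verts → e ∈ H.edges → 2 ≤ e.card → v ∈ e →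
      (∀ u ∈ e, u ≠ v → Burns H S u) → Burns H S v

/-- A lazy burning set: a set of vertices whose propagation closure is all of `V(H)`. -/
def IsLazySet (H : BurnHypergraph α) (S : Finset α) : Prop :=
  S ⊆ H.verts ∧ ∀ v ∈ H.verts, H.Burns S v

/-- The lazy burning number: the minimum size of a lazy burning set. -/
noncomputable def lazyBurn (H : BurnHypergraph α) : ℕ :=
  sInf {n | ∃ S : Finset α, H.IsLazySet S ∧ S.card = n}

/-- One round of fire propagation applied to the burned set `F`. -/
noncomputable def step (H : BurnHypergraph α) (F : Finset α) : Finset α :=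
  F ∪ H.verts.filter (fun v => ∃ e ∈ H.edges, 2 ≤ e.card ∧ v ∈ e ∧ e \ {v} ⊆ F)

/-- The set of burned vertices after playing the sources `us` in order
(each round: propagation happens, and simultaneously the next source is burned). -/
noncomputable def state (H : BurnHypergraph α) (us : List α) : Finset α :=
  us.foldl (fun F u => insert u (H.step F)) ∅

/-- `us` is a burning sequence for `H`: each source is a vertex that was not burned
at the end of the previous round, and after the final round all of `V(H)` is burned. -/
def IsBurningSeq (H : BurnHypergraph α) (us : List α) : Prop :=
  (∀ i : Fin us.length, us.get i ∈ H.verts ∧ us.get i ∉ H.state (us.take i.1)) ∧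
  H.state us = H.verts

/-- The (round-based) burning number: the minimum length of a burning sequence. -/
noncomputable def burn (H : BurnHypergraph α) : ℕ :=
  sInf {n | ∃ us : List α, H.IsBurningSeq us ∧ us.length = n}

/-- An independent set of vertices: one containing no edge of `H`. -/
def IsIndep (H : BurnHypergraph α) (X : Finset α) : Prop :=
  X ⊆ H.verts ∧ ∀ e ∈ H.edges, ¬ e ⊆ X

/-- The independence number `α(H)`. -/
noncomputable def indepNum (H : BurnHypergraph α) : ℕ :=
  sSup {n | ∃ X : Finset α, H.IsIndep X ∧ X.card = n}

/-- Two vertices are adjacent if they lie in a common edge. -/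
def Adj (H : BurnHypergraph α) (u v : α) : Prop :=
  ∃ e ∈ H.edges, u ∈ e ∧ v ∈ e

/-- Two vertices are connected if they are joined by a path (alternating
vertices and edges). -/
def Conn (H : BurnHypergraph α) (u v : α) : Prop :=
  Relation.ReflTransGen H.Adj u v

/-- A hypergraph is connected if every two vertices are connected. -/
def IsConnected (H : BurnHypergraph α) : Prop :=
  ∀ u ∈ H.verts, ∀ v ∈ H.verts, H.Conn u v

/-- `G : Fin k → BurnHypergraph α` is the family of connected components of `H`:
the vertex sets are nonempty, partition `V(H)`, each component carries exactly the
edges of `H` lying inside it, each component is connected, and components are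
maximal with respect to connectivity. -/
def IsComponents (H : BurnHypergraph α) {k : ℕ} (G : Fin k → BurnHypergraph α) : Prop :=
  (∀ i, (G i).verts.Nonempty) ∧
  (∀ i, (G i).verts ⊆ H.verts) ∧
  (∀ i, (G i).edges = H.edges.filter (fun e => e ⊆ (G i).verts)) ∧
  (∀ v ∈ H.verts, ∃! i, v ∈ (G i).verts) ∧
  (∀ i, ∀ u ∈ (G i).verts, ∀ v ∈ (G i).verts, H.Conn u v) ∧
  (∀ i, ∀ u ∈ (G i).verts, ∀ v ∈ H.verts, H.Conn u v → v ∈ (G i).verts)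

end BurnHypergraph

/-! On `{0, …, N-1}` with the initial segments `{0, …, i}` as edges, the vertex `0` alone
ignites everything by propagation, so the lazy burning number is `1`. The edges form a chain,
so each round ignites at most one vertex by propagation besides its new source; at least
`N / 2` rounds are therefore needed, and the burning number grows without bound. -/

namespace BurnHypergraph

variable {α : Type*} [DecidableEq α] (H : BurnHypergraph α)

theorem not_burns_empty (v : α) : ¬ H.Burns ∅ v := by
  intro h
  induction h with
  | init h => simp at h
  | @prop w e _ _ he_card _ _ ih =>
    obtain ⟨u, hu, huw⟩ := exists_mem_ne he_card w
    exact ih u hu huw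

theorem lazyBurn_le_card {S : Finset α} (hS : H.IsLazySet S) : H.lazyBurn ≤ S.card :=
  Nat.sInf_le ⟨S, hS, rfl⟩

theorem one_le_lazyBurn (hV : H.verts.Nonempty) : 1 ≤ H.lazyBurn := by
  obtain ⟨v, hv⟩ := hV
  refine le_csInf ⟨H.verts.card, H.verts, ⟨subset_rfl, fun u hu => .init hu⟩, rfl⟩ ?_
  rintro n ⟨S, ⟨-, hS⟩, rfl⟩
  rw [Nat.one_le_iff_ne_zero, Ne, card_eq_zero]
  rintro rfl
  exact H.not_burns_empty v (hS v hv)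

theorem step_subset {F : Finset α} (hF : F ⊆ H.verts) : H.step F ⊆ H.verts :=
  union_subset hF (filter_subset _ _)

theorem state_append (us : List α) (v : α) :
    H.state (us ++ [v]) = insert v (H.step (H.state us)) := by
  simp [state, List.foldl_append]

theorem state_subset_verts {us : List α} (h : ∀ u ∈ us, u ∈ H.verts) :
    H.state us ⊆ H.verts := by
  induction us using List.reverseRecOn with
  | nil => simp [state]
  | append_singleton us v ih =>
    rw [state_append]
    exact insert_subset (h v (by simp)) (H.step_subset (ih fun u hu => h u (by simp [hu])))

def IsSourceSeq (us : List α) : Prop :=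
  ∀ i : Fin us.length, us.get i ∈ H.verts ∧ us.get i ∉ H.state (us.take i.1)

variable {H}

theorem IsSourceSeq.mem_verts {us : List α} (h : H.IsSourceSeq us) : ∀ u ∈ us, u ∈ H.verts := by
  intro u hu
  obtain ⟨i, rfl⟩ := List.get_of_mem hu
  exact (h i).1

theorem IsSourceSeq.append {us : List α} {v : α} (h : H.IsSourceSeq us) (hv : v ∈ H.verts)
    (hv_new : v ∉ H.state us) : H.IsSourceSeq (us ++ [v]) := by
  intro ⟨i, hi⟩
  rw [List.length_append, List.length_singleton, Nat.lt_succ_iff_lt_or_eq] at hi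
  rcases hi with hi | rfl
  · simpa [List.getElem_append_left hi, List.take_append, Nat.sub_eq_zero_of_le hi.le]
      using h ⟨i, hi⟩
  · simpa using ⟨hv, hv_new⟩

variable (H)

/-- Without a burning sequence, `burn` would be the junk value `sInf ∅ = 0`. -/
theorem exists_isBurningSeq : ∃ us : List α, H.IsBurningSeq us := by
  suffices ∀ n, ∀ us, H.IsSourceSeq us → (H.verts \ H.state us).card = n →
      ∃ us : List α, H.IsBurningSeq us from
    this _ [] (fun i => Fin.elim0 i) rfl
  intro n
  induction n using Nat.strong_induction_on with
  | _ n ih =>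
    rintro us hus rfl
    have hsub := H.state_subset_verts hus.mem_verts
    by_cases hdone : H.verts ⊆ H.state us
    · exact ⟨us, hus, subset_antisymm hsub hdone⟩
    obtain ⟨v, hv, hv_new⟩ := not_subset.1 hdone
    refine ih _ ?_ _ (hus.append hv hv_new) rfl
    refine card_lt_card ⟨sdiff_subset_sdiff subset_rfl ?_, fun h => ?_⟩
    · rw [state_append]
      exact (subset_union_left).trans (subset_insert _ _)
    · have := h (mem_sdiff.2 ⟨hv, hv_new⟩)
      simp [state_append] at this

theorem card_state_le {d : ℕ} (hd : ∀ F, (H.step F).card ≤ F.card + d) (us : List α) :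
    (H.state us).card ≤ (d + 1) * us.length := by
  induction us using List.reverseRecOn with
  | nil => simp [state]
  | append_singleton us v ih =>
    rw [state_append, List.length_append, List.length_singleton]
    have := card_insert_le v (H.step (H.state us))
    have := hd (H.state us)
    linarith

theorem card_verts_le_mul_burn {d : ℕ} (hd : ∀ F, (H.step F).card ≤ F.card + d) :
    H.verts.card ≤ (d + 1) * H.burn := by
  obtain ⟨us, hus⟩ := H.exists_isBurningSeq
  obtain ⟨us, ⟨-, hfull⟩, hlen⟩ := Nat.sInf_mem (s := {n | ∃ us, H.IsBurningSeq us ∧ us.length = n})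
    ⟨_, us, hus, rfl⟩
  rw [burn, ← hlen, ← hfull]
  exact H.card_state_le hd us

/-- Of two vertices newly ignited through nested edges, the one in the smaller edge also lies
in the larger edge, all of whose other vertices were already burned. -/
theorem card_step_le_of_isChain (hchain : IsChain (· ⊆ ·) (H.edges : Set (Finset α)))
    (F : Finset α) : (H.step F).card ≤ F.card + 1 := by
  set A := H.verts.filter (fun v => ∃ e ∈ H.edges, 2 ≤ e.card ∧ v ∈ e ∧ e \ {v} ⊆ F)
  have hA : (A \ F).card ≤ 1 := by
    refine card_le_one.2 fun a ha b hb => by_contra fun hab => ?_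
    simp only [A, mem_sdiff, mem_filter] at ha hb
    obtain ⟨⟨-, e, he, -, hae, heF⟩, haF⟩ := ha
    obtain ⟨⟨-, f, hf, -, hbf, hfF⟩, hbF⟩ := hb
    rcases hchain.total he hf with hef | hfe
    · exact haF (hfF (mem_sdiff.2 ⟨hef hae, by simpa using hab⟩))
    · exact hbF (heF (mem_sdiff.2 ⟨hfe hbf, by simpa using Ne.symm hab⟩))
  calc (H.step F).card = (F ∪ A \ F).card := by rw [step, union_sdiff_self_eq_union]
    _ ≤ F.card + (A \ F).card := card_union_le _ _
    _ ≤ F.card + 1 := by omega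

end BurnHypergraph

open BurnHypergraph

def initialSegments (N : ℕ) : BurnHypergraph ℕ where
  verts := range N
  edges := (range N).image fun i => range (i + 1)
  edges_sub := by
    simp only [mem_image, mem_range]
    rintro _ ⟨i, hi, rfl⟩
    exact range_subset_range.2 hi

namespace initialSegments

variable {N : ℕ}

theorem isChain_edges : IsChain (· ⊆ ·) ((initialSegments N).edges : Set (Finset ℕ)) := by
  simp only [initialSegments, coe_image]
  rintro _ ⟨i, -, rfl⟩ _ ⟨j, -, rfl⟩ -
  rcases le_total i j with h | h
  · exact .inl (range_subset_range.2 (by omega))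
  · exact .inr (range_subset_range.2 (by omega))

theorem burns_zero {v : ℕ} (hv : v < N) : (initialSegments N).Burns {0} v := by
  induction v using Nat.strong_induction_on with
  | _ v ih =>
    rcases v with _ | w
    · exact .init (mem_singleton_self 0)
    refine .prop (e := range (w + 2)) (by simpa [initialSegments] using hv)
      (mem_image.2 ⟨w + 1, mem_range.2 hv, rfl⟩) (by simp) (by simp) fun u hu huv => ?_
    rw [mem_range] at hu
    exact ih u (by omega) (by omega)

theorem lazyBurn_eq_one (hN : 0 < N) : (initialSegments N).lazyBurn = 1 := by
  have hzero : 0 ∈ (initialSegments N).verts := mem_range.2 hN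
  refine le_antisymm ?_ (one_le_lazyBurn _ ⟨0, hzero⟩)
  refine lazyBurn_le_card _ ⟨singleton_subset_iff.2 hzero, fun v hv => burns_zero ?_⟩
  exact mem_range.1 hv

theorem le_burn (m : ℕ) : m ≤ (initialSegments (2 * m)).burn := by
  have := card_verts_le_mul_burn _ (card_step_le_of_isChain _ (isChain_edges (N := 2 * m)))
  rw [show (initialSegments (2 * m)).verts = range (2 * m) from rfl, card_range] at this
  omega

end initialSegments

theorem burn_sub_lazyBurn_unbounded (k : ℕ) :
    (∃ H : BurnHypergraph ℕ, H.burn - H.lazyBurn > k) ∧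
    (∃ H' : BurnHypergraph ℕ, ((H'.burn : ℚ) / (H'.lazyBurn : ℚ)) > (k : ℚ)) := by
  set H := initialSegments (2 * (k + 2))
  have hlazy : H.lazyBurn = 1 := initialSegments.lazyBurn_eq_one (by omega)
  have hburn : k + 2 ≤ H.burn := initialSegments.le_burn (k + 2)
  refine ⟨⟨H, by omega⟩, ⟨H, ?_⟩⟩
  rw [hlazy, Nat.cast_one, div_one]
  exact_mod_cast (by omega : k < H.burn)
end

section
/- Let G be the weak subhypergraph of H induced by a vertex set V' ⊆ V(H), i.e., V(G) = V' and E(G) = {e ∩ V' : e ∈ E(H), e ∩ V' ≠ ∅}. If |E(G)| = |E(H)| and E(G) contains no singleton edges (equivalently, every edge of H meets V' in at least two vertices), then b_L(G) ≤ b_L(H). -/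
open Finset

/-! Cutting an edge of `H` down to `V'` leaves at least two vertices, so whenever fire spreads
in `H` along an edge `e` to a vertex of `V'`, it spreads in `G` along `e ∩ V'`. By induction on
the propagation, `S ∩ V'` is then a lazy burning set of `G` for every lazy burning set `S`
of `H`, and it is no larger than `S`. -/

namespace FinHypergraph

variable {α : Type*} [DecidableEq α]

theorem lazyBurn_le_card {H : FinHypergraph α} {S : Finset α} (hS : H.IsLazySet S) :
    H.lazyBurn ≤ S.card :=
  Nat.sInf_le ⟨S, hS, rfl⟩

section Restrict

variable {H G : FinHypergraph α} {V' : Finset α}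

theorem Burns.inter (hedges : ∀ e ∈ H.edges, e ∩ V' ∈ G.edges ∧ 2 ≤ (e ∩ V').card)
    (hverts : V' ⊆ G.verts) {S : Finset α} {v : α} (h : H.Burns S v)
    (hv : v ∈ V') : G.Burns (S ∩ V') v := by
  induction h with
  | init hvS => exact Burns.init (mem_inter.mpr ⟨hvS, hv⟩)
  | prop _ he _ hve _ ih =>
    exact Burns.prop (hverts hv) (hedges _ he).1 (hedges _ he).2 (mem_inter.mpr ⟨hve, hv⟩)
      fun u hu hne => ih u (mem_inter.mp hu).1 hne (mem_inter.mp hu).2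

theorem IsLazySet.inter (hedges : ∀ e ∈ H.edges, e ∩ V' ∈ G.edges ∧ 2 ≤ (e ∩ V').card)
    (hV' : V' ⊆ H.verts) (hGv : G.verts = V') {S : Finset α}
    (hS : H.IsLazySet S) : G.IsLazySet (S ∩ V') :=
  ⟨hGv ▸ inter_subset_right, fun v hv =>
    Burns.inter hedges hGv.ge (hS.2 v (hV' (hGv ▸ hv))) (hGv ▸ hv)⟩

theorem lazyBurn_le_of_forall_inter_mem_edges
    (hedges : ∀ e ∈ H.edges, e ∩ V' ∈ G.edges ∧ 2 ≤ (e ∩ V').card)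
    (hV' : V' ⊆ H.verts) (hGv : G.verts = V') :
    G.lazyBurn ≤ H.lazyBurn := by
  obtain ⟨S, hS, hcard⟩ := H.exists_isLazySet_card_eq_lazyBurn
  calc G.lazyBurn ≤ (S ∩ V').card := lazyBurn_le_card (hS.inter hedges hV' hGv)
    _ ≤ S.card := card_le_card inter_subset_left
    _ = H.lazyBurn := hcard

end Restrict

end FinHypergraph

theorem lazyBurn_weak_induced_le_general {α : Type*} [DecidableEq α]
    (H G : FinHypergraph α) (V' : Finset α) (hV' : V' ⊆ H.verts)
    (hGv : G.verts = V')
    (hGe : G.edges = (H.edges.image (fun e => e ∩ V')).filter (fun e => e.Nonempty))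
    (hmeet : ∀ e ∈ H.edges, 2 ≤ (e ∩ V').card) :
    G.lazyBurn ≤ H.lazyBurn := by
  refine FinHypergraph.lazyBurn_le_of_forall_inter_mem_edges
    (fun e he => ⟨?_, hmeet e he⟩) hV' hGv
  rw [hGe, mem_filter]
  exact ⟨mem_image_of_mem _ he, card_pos.mp (by linarith [hmeet e he])⟩

theorem lazyBurn_weak_induced_le {α : Type*} [DecidableEq α]
    (H G : FinHypergraph α) (V' : Finset α) (hV' : V' ⊆ H.verts)
    (hGv : G.verts = V')
    (hGe : G.edges = (H.edges.image (fun e => e ∩ V')).filter (fun e => e.Nonempty))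
    (hcard : G.edges.card = H.edges.card)
    (hmeet : ∀ e ∈ H.edges, 2 ≤ (e ∩ V').card) :
    G.lazyBurn ≤ H.lazyBurn :=
  lazyBurn_weak_induced_le_general H G V' hV' hGv hGe hmeet
end
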